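/- Let H be a finite group, τ an automorphism of H of order r, L/K a cyclic Galois extension of degree r in characteristic zero with Galois group ⟨σ⟩, and ρ : H → GL(n,L) an absolutely irreducible representation intertwined with σ∘ρ∘τ⁻¹ by a matrix X satisfying N(X) = σ^{r-1}(X)···σ(X)·X = I. Then there exists Y ∈ GL(n,L) such that the conjugate representation ρ'(h) = Yρ(h)Y⁻¹ satisfies σ(ρ'(h)) = ρ'(τ(h)) for all h ∈ H. -/

import Mathlib

open Matrix

noncomputable def galMatNorm {K L : Type} [Field K] [Field L] [Algebra K L]
    (σ : L ≃ₐ[K] L) (r : ℕ) {n : ℕ} (X : Matrix (Fin n) (Fin n) L) :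
    Matrix (Fin n) (Fin n) L :=
  (((List.range r).reverse).map (fun i => X.map ⇑(σ ^ i))).prod

noncomputable def galFieldNorm {K L : Type} [Field K] [Field L] [Algebra K L]
    (σ : L ≃ₐ[K] L) (r : ℕ) (μ : L) : L :=
  ∏ i ∈ Finset.range r, (σ ^ i) μ

section aux
variable {K L : Type} [Field K] [Field L] [Algebra K L] {n : ℕ}

noncomputable def matMapU (g : L ≃ₐ[K] L) :
    (Matrix (Fin n) (Fin n) L)ˣ →* (Matrix (Fin n) (Fin n) L)ˣ :=
  Units.map (RingHom.mapMatrix (g : L →+* L)).toMonoidHom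

@[simp] lemma matMapU_coe (g : L ≃ₐ[K] L) (U : (Matrix (Fin n) (Fin n) L)ˣ) :
    ((matMapU g U : (Matrix (Fin n) (Fin n) L)ˣ) : Matrix (Fin n) (Fin n) L)
      = (U : Matrix (Fin n) (Fin n) L).map ⇑g := rfl

lemma matMapU_one_aut (U : (Matrix (Fin n) (Fin n) L)ˣ) :
    matMapU (K := K) (1 : L ≃ₐ[K] L) U = U := by
  ext; simp [matMapU_coe]

lemma matMapU_comp (g h : L ≃ₐ[K] L) (U : (Matrix (Fin n) (Fin n) L)ˣ) :
    matMapU g (matMapU h U) = matMapU (g * h) U := by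
  ext; simp [matMapU_coe, Matrix.map_map]

noncomputable def Au (σ : L ≃ₐ[K] L) (X : (Matrix (Fin n) (Fin n) L)ˣ) : ℕ → (Matrix (Fin n) (Fin n) L)ˣ
  | 0 => 1
  | (i+1) => matMapU (σ ^ i) X * Au σ X i

lemma galMatNorm_succ (σ : L ≃ₐ[K] L) (r : ℕ) (M : Matrix (Fin n) (Fin n) L) :
    galMatNorm σ (r+1) M = (M.map ⇑(σ ^ r)) * galMatNorm σ r M := by
  simp [galMatNorm, List.range_succ]

lemma Au_coe (σ : L ≃ₐ[K] L) (X : (Matrix (Fin n) (Fin n) L)ˣ) (r : ℕ) :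
    ((Au σ X r : (Matrix (Fin n) (Fin n) L)ˣ) : Matrix (Fin n) (Fin n) L)
      = galMatNorm σ r (X : Matrix (Fin n) (Fin n) L) := by
  induction r with
  | zero => simp [Au, galMatNorm]
  | succ i ih => rw [galMatNorm_succ, ← ih]; rfl

lemma Au_shift (σ : L ≃ₐ[K] L) (X : (Matrix (Fin n) (Fin n) L)ˣ) (i : ℕ) :
    matMapU σ (Au σ X i) * X = Au σ X (i+1) := by
  induction i with
  | zero => simp [Au, matMapU_one_aut, pow_zero]
  | succ i ih =>
      show matMapU σ (matMapU (σ ^ i) X * Au σ X i) * X = _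
      rw [_root_.map_mul, mul_assoc, ih, matMapU_comp, ← pow_succ']
      rfl

end aux

section aux2
variable {K L : Type} [Field K] [Field L] [Algebra K L] {n : ℕ}

lemma sigma_mulVec (g : L ≃ₐ[K] L) (B : Matrix (Fin n) (Fin n) L) (w : Fin n → L) :
    (fun k => g ((B *ᵥ w) k)) = (B.map ⇑g) *ᵥ (fun k => g (w k)) := by
  funext k
  simp [Matrix.mulVec, dotProduct, map_sum]

lemma mulVec_sum' (X : Matrix (Fin n) (Fin n) L) (s : Finset ℕ) (f : ℕ → Fin n → L) :
    X *ᵥ (∑ i ∈ s, f i) = ∑ i ∈ s, X *ᵥ f i := by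
  have := map_sum (Matrix.mulVecLin X) f s
  simp only [Matrix.mulVecLin_apply] at this
  exact this

/-- the averaging operator -/
noncomputable def Pav (σ : L ≃ₐ[K] L) (X : (Matrix (Fin n) (Fin n) L)ˣ) (r : ℕ)
    (v : Fin n → L) : Fin n → L :=
  ∑ i ∈ Finset.range r, (((Au σ X i)⁻¹ : (Matrix (Fin n) (Fin n) L)ˣ) : Matrix (Fin n) (Fin n) L)
      *ᵥ (fun k => (σ ^ i) (v k))

lemma Pav_fixed (σ : L ≃ₐ[K] L) (X : (Matrix (Fin n) (Fin n) L)ˣ) (r : ℕ)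
    (hσr : σ ^ r = 1) (hAr : Au σ X r = 1) (v : Fin n → L) :
    (fun k => σ ((Pav σ X r v) k)) = (X : Matrix (Fin n) (Fin n) L) *ᵥ (Pav σ X r v) := by
  set t : ℕ → (Fin n → L) := fun i =>
    (((Au σ X i)⁻¹ : (Matrix (Fin n) (Fin n) L)ˣ) : Matrix (Fin n) (Fin n) L)
      *ᵥ (fun k => (σ ^ i) (v k)) with ht
  have key : ∀ i, (fun k => σ ((t i) k)) = (X : Matrix (Fin n) (Fin n) L) *ᵥ t (i+1) := by
    intro i
    rw [ht]
    rw [sigma_mulVec]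
    have h3 := Au_shift σ X i
    have h3' : matMapU σ (Au σ X i) = Au σ X (i+1) * X⁻¹ := by
      rw [← h3, mul_inv_cancel_right]
    have h2 : matMapU σ ((Au σ X i)⁻¹) = X * (Au σ X (i+1))⁻¹ := by
      rw [_root_.map_inv, h3', _root_.mul_inv_rev, inv_inv]
    have h1 : ((((Au σ X i)⁻¹ : (Matrix (Fin n) (Fin n) L)ˣ) : Matrix (Fin n) (Fin n) L)).map ⇑σ
        = (X : Matrix (Fin n) (Fin n) L) *
          (((Au σ X (i+1))⁻¹ : (Matrix (Fin n) (Fin n) L)ˣ) : Matrix (Fin n) (Fin n) L) := by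
      rw [← matMapU_coe σ, h2]; rfl
    rw [h1, ← Matrix.mulVec_mulVec]
    have hfn : (fun k => σ ((σ ^ i) (v k))) = fun k => (σ ^ (i+1)) (v k) := by
      funext k; rw [pow_succ']; rfl
    rw [hfn]
  have htr : t r = t 0 := by
    rw [ht]; simp [hAr, hσr, Au]
  have hsum : ∑ i ∈ Finset.range r, t (i+1) = ∑ i ∈ Finset.range r, t i := by
    have h4 := Finset.sum_range_succ' t r
    have h5 := Finset.sum_range_succ t r
    rw [h5, htr] at h4
    exact (add_right_cancel h4).symm
  have hPav : Pav σ X r v = ∑ i ∈ Finset.range r, t i := rfl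
  rw [hPav]
  have : (fun k => σ ((∑ i ∈ Finset.range r, t i) k))
      = ∑ i ∈ Finset.range r, fun k => σ ((t i) k) := by
    funext k
    rw [Finset.sum_apply, map_sum, Finset.sum_apply]
  rw [this]
  have : ∑ i ∈ Finset.range r, (fun k => σ ((t i) k))
      = ∑ i ∈ Finset.range r, (X : Matrix (Fin n) (Fin n) L) *ᵥ t (i+1) := by
    exact Finset.sum_congr rfl (fun i _ => key i)
  rw [this, ← mulVec_sum', hsum]

end aux2

section aux3
variable {K L : Type} [Field K] [Field L] [Algebra K L] {n : ℕ}

lemma Pav_smul (σ : L ≃ₐ[K] L) (X : (Matrix (Fin n) (Fin n) L)ˣ) (r : ℕ)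
    (v : Fin n → L) (lam : L) :
    Pav σ X r (lam • v) = ∑ i ∈ Finset.range r, (σ ^ i) lam •
      ((((Au σ X i)⁻¹ : (Matrix (Fin n) (Fin n) L)ˣ) : Matrix (Fin n) (Fin n) L)
        *ᵥ (fun k => (σ ^ i) (v k))) := by
  unfold Pav
  refine Finset.sum_congr rfl (fun i _ => ?_)
  have h : (fun k => (σ ^ i) ((lam • v) k)) = (σ ^ i) lam • (fun k => (σ ^ i) (v k)) := by
    funext k
    simp only [Pi.smul_apply, smul_eq_mul]
    exact _root_.map_mul _ _ _
  rw [h, Matrix.mulVec_smul]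

lemma Pav_span (σ : L ≃ₐ[K] L) (X : (Matrix (Fin n) (Fin n) L)ˣ) (r : ℕ) (hr : 0 < r)
    (hinj : ∀ i < r, ∀ j < r, σ ^ i = σ ^ j → i = j) :
    Submodule.span L (Set.range (Pav σ X r)) = ⊤ := by
  by_contra hn
  obtain ⟨φ, hφ0, hφbot⟩ := Submodule.exists_dual_map_eq_bot_of_lt_top
    (lt_top_iff_ne_top.mpr hn) inferInstance
  have hvanish : ∀ w : Fin n → L, φ (Pav σ X r w) = 0 := by
    intro w
    have hmem : φ (Pav σ X r w) ∈ (Submodule.span L (Set.range (Pav σ X r))).map φ :=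
      Submodule.mem_map_of_mem (Submodule.subset_span ⟨w, rfl⟩)
    rw [hφbot] at hmem
    simpa using hmem
  have Finj : Function.Injective
      (fun i : Fin r => ((σ ^ (i : ℕ)).toAlgHom.toRingHom.toMonoidHom : L →* L)) := by
    intro i j hij
    have hfun : ⇑((σ ^ (i : ℕ)).toAlgHom.toRingHom.toMonoidHom : L →* L)
        = ⇑((σ ^ (j : ℕ)).toAlgHom.toRingHom.toMonoidHom : L →* L) :=
      congrArg DFunLike.coe hij
    have hpow : σ ^ (i : ℕ) = σ ^ (j : ℕ) := by
      ext x; exact congrFun hfun x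
    exact Fin.ext (hinj i i.2 j j.2 hpow)
  have li : LinearIndependent L
      (fun i : Fin r => ⇑((σ ^ (i : ℕ)).toAlgHom.toRingHom.toMonoidHom : L →* L)) :=
    (linearIndependent_monoidHom L L).comp _ Finj
  apply hφ0
  refine LinearMap.ext fun v => ?_
  show φ v = 0
  set c : Fin r → L := fun i => φ
    ((((Au σ X (i : ℕ))⁻¹ : (Matrix (Fin n) (Fin n) L)ˣ) : Matrix (Fin n) (Fin n) L)
      *ᵥ (fun k => (σ ^ (i : ℕ)) (v k))) with hc
  have hzero : ∀ i : Fin r, c i = 0 := by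
    have hcomb : ∑ i : Fin r, c i •
        ⇑((σ ^ (i : ℕ)).toAlgHom.toRingHom.toMonoidHom : L →* L) = 0 := by
      funext lam
      rw [Finset.sum_apply]
      simp only [Pi.smul_apply, smul_eq_mul]
      have hthis := hvanish (lam • v)
      rw [Pav_smul, map_sum] at hthis
      have hthis2 : ∑ i ∈ Finset.range r, (fun i : ℕ => φ
          ((((Au σ X i)⁻¹ : (Matrix (Fin n) (Fin n) L)ˣ) : Matrix (Fin n) (Fin n) L)
            *ᵥ (fun k => (σ ^ i) (v k))) * (σ ^ i) lam) i = 0 := by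
        rw [← hthis]
        refine Finset.sum_congr rfl (fun i _ => ?_)
        rw [LinearMap.map_smul, smul_eq_mul, mul_comm]
      have := (Fin.sum_univ_eq_sum_range (fun i : ℕ => φ
          ((((Au σ X i)⁻¹ : (Matrix (Fin n) (Fin n) L)ˣ) : Matrix (Fin n) (Fin n) L)
            *ᵥ (fun k => (σ ^ i) (v k))) * (σ ^ i) lam) r).trans hthis2
      rw [Pi.zero_apply]
      exact this
    exact fun i => Fintype.linearIndependent_iff.mp li c hcomb i
  have h0 : φ ((((Au σ X 0)⁻¹ : (Matrix (Fin n) (Fin n) L)ˣ) : Matrix (Fin n) (Fin n) L)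
      *ᵥ (fun k => (σ ^ (0:ℕ)) (v k))) = 0 := hzero ⟨0, hr⟩
  have hv : (((Au σ X 0)⁻¹ : (Matrix (Fin n) (Fin n) L)ˣ) : Matrix (Fin n) (Fin n) L)
      *ᵥ (fun k => (σ ^ (0:ℕ)) (v k)) = v := by
    simp [Au]
  rw [hv] at h0
  exact h0

end aux3

/-- If `X` intertwines the absolutely irreducible `ρ` with `σ∘ρ∘τ⁻¹` and
`N(X) = σ^{r-1}(X)⋯σ(X)·X = I`, then there is `Y ∈ GL(n,L)` such that the conjugate
representation `ρ'(h) = Yρ(h)Y⁻¹` satisfies `σ(ρ'(h)) = ρ'(τ(h))` for all `h ∈ H`. -/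
theorem exists_conjugate_equivariant_of_matNorm_one
    {K L : Type} [Field K] [Field L] [Algebra K L] [IsGalois K L]
    [FiniteDimensional K L] [CharZero K]
    (r : ℕ) (σ : L ≃ₐ[K] L) (hσord : orderOf σ = r)
    (hσgen : ∀ g : L ≃ₐ[K] L, g ∈ Subgroup.zpowers σ)
    {H : Type} [Group H] [Finite H]
    (τ : MulAut H) (hτ : τ ^ r = 1)
    {n : ℕ} (ρ : H →* (Matrix (Fin n) (Fin n) L)ˣ)
    (hSchur : ∀ A : Matrix (Fin n) (Fin n) L,
      (∀ h : H, A * (ρ h : Matrix (Fin n) (Fin n) L) = (ρ h : Matrix (Fin n) (Fin n) L) * A) →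
      ∃ c : L, A = c • (1 : Matrix (Fin n) (Fin n) L))
    (X : (Matrix (Fin n) (Fin n) L)ˣ)
    (hX : ∀ h : H, ((ρ (τ⁻¹ h) : Matrix (Fin n) (Fin n) L)).map ⇑σ
        = ((X * ρ h * X⁻¹ : (Matrix (Fin n) (Fin n) L)ˣ) : Matrix (Fin n) (Fin n) L))
    (hN : galMatNorm σ r (X : Matrix (Fin n) (Fin n) L) = 1) :
    ∃ Y : (Matrix (Fin n) (Fin n) L)ˣ, ∀ h : H,
      ((Y * ρ h * Y⁻¹ : (Matrix (Fin n) (Fin n) L)ˣ) : Matrix (Fin n) (Fin n) L).map ⇑σ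
        = ((Y * ρ (τ h) * Y⁻¹ : (Matrix (Fin n) (Fin n) L)ˣ) : Matrix (Fin n) (Fin n) L) := by
  classical
  have hr : 0 < r := hσord ▸ orderOf_pos σ
  have hσr : σ ^ r = 1 := by rw [← hσord]; exact pow_orderOf_eq_one σ
  have hinj : ∀ i < r, ∀ j < r, σ ^ i = σ ^ j → i = j := by
    intro i hi j hj hij
    exact pow_injOn_Iio_orderOf (by simpa [hσord] using hi) (by simpa [hσord] using hj) hij
  have hAr : Au σ X r = 1 := by
    apply Units.ext
    rw [Au_coe, hN]
    rfl
  -- build the basis of fixed vectors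
  obtain ⟨b, hbsub, hbspan, hbind⟩ := exists_linearIndependent L (Set.range (Pav σ X r))
  rw [Pav_span σ X r hr hinj] at hbspan
  let B : Module.Basis ↥b L (Fin n → L) := Module.Basis.mk hbind (by rw [Subtype.range_coe]; exact hbspan.ge)
  letI : Fintype ↥b := FiniteDimensional.fintypeBasisIndex B
  have hcard : Fintype.card ↥b = n := by
    have h1 := Module.finrank_eq_card_basis B
    rw [Module.finrank_fin_fun] at h1
    omega
  let e : ↥b ≃ Fin n := Fintype.equivFinOfCardEq hcard
  let B' : Module.Basis (Fin n) L (Fin n → L) := B.reindex e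
  have hBfix : ∀ j : Fin n, (fun k => σ ((B' j) k)) = (X : Matrix (Fin n) (Fin n) L) *ᵥ (B' j) := by
    intro j
    have hmem : (B' j : Fin n → L) ∈ Set.range (Pav σ X r) := by
      apply hbsub
      have : B' j = B (e.symm j) := by rw [Module.Basis.reindex_apply]
      rw [this]
      have : B (e.symm j) = ((e.symm j : ↥b) : Fin n → L) := by
        simp [B, Module.Basis.mk_apply]
      rw [this]
      exact (e.symm j).2
    obtain ⟨w, hw⟩ := hmem
    rw [← hw]
    exact Pav_fixed σ X r hσr hAr w
  -- the matrix Y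
  let Ymat : Matrix (Fin n) (Fin n) L := (Pi.basisFun L (Fin n)).toMatrix ⇑B'
  letI : Invertible Ymat := (Pi.basisFun L (Fin n)).invertibleToMatrix B'
  let Yu : (Matrix (Fin n) (Fin n) L)ˣ := unitOfInvertible Ymat
  have hYmat : Ymat = Matrix.transpose (Matrix.of fun j k => B' j k) := by
    have := Module.Basis.coePiBasisFun.toMatrix_eq_transpose (R := L) (ι := Fin n)
    show (Pi.basisFun L (Fin n)).toMatrix ⇑B' = _
    rw [show ((Pi.basisFun L (Fin n)).toMatrix ⇑B') = ((Pi.basisFun L (Fin n)).toMatrix : Matrix (Fin n) (Fin n) L → Matrix (Fin n) (Fin n) L) (Matrix.of fun j k => B' j k) from rfl, this]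
  have hY : Ymat.map ⇑σ = (X : Matrix (Fin n) (Fin n) L) * Ymat := by
    ext k j
    rw [Matrix.map_apply, Matrix.mul_apply]
    have hkj : Ymat k j = B' j k := by rw [hYmat]; rfl
    rw [hkj]
    have := congrFun (hBfix j) k
    rw [this]
    rw [Matrix.mulVec, dotProduct]
    refine Finset.sum_congr rfl (fun m _ => ?_)
    rw [show Ymat m j = B' j m from by rw [hYmat]; rfl]
  have hYu : matMapU σ Yu = X * Yu := by
    apply Units.ext
    rw [matMapU_coe, Units.val_mul]
    exact hY
  have hXU : ∀ h : H, matMapU σ (ρ h) = X * ρ (τ h) * X⁻¹ := by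
    intro h
    apply Units.ext
    rw [matMapU_coe]
    have := hX (τ h)
    rwa [show τ⁻¹ (τ h) = h from by simp] at this
  refine ⟨Yu⁻¹, fun h => ?_⟩
  have key : matMapU σ (Yu⁻¹ * ρ h * (Yu⁻¹)⁻¹) = Yu⁻¹ * ρ (τ h) * (Yu⁻¹)⁻¹ := by
    rw [inv_inv, _root_.map_mul, _root_.map_mul, _root_.map_inv, hXU h, hYu]
    group
  calc ((Yu⁻¹ * ρ h * (Yu⁻¹)⁻¹ : (Matrix (Fin n) (Fin n) L)ˣ) : Matrix (Fin n) (Fin n) L).map ⇑σ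
      = ((matMapU σ (Yu⁻¹ * ρ h * (Yu⁻¹)⁻¹) : (Matrix (Fin n) (Fin n) L)ˣ) : Matrix (Fin n) (Fin n) L) :=
        (matMapU_coe σ _).symm
    _ = _ := by rw [key]
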